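/- Under the assumptions that Σ_i α_i ≤ k ≤ Σ_i β_i and |χ⁻¹(i)| ≥ β_i for all i, the matroid M = (V, ℐ) has rank k, i.e., every maximal independent set has cardinality exactly k. -/

import Mathlib

open Finset

variable {V : Type*} [DecidableEq V] [Fintype V]

/-- Number of vertices of color `i` in `X`. -/
def colorCount {c : ℕ} (χ : V → Fin c) (X : Finset V) (i : Fin c) : ℕ :=
  (X.filter (fun v => χ v = i)).card

/-- The family ℐ of independent sets: color upper bounds hold and there is
still room to satisfy all lower bounds within `k` elements
(`α i - colorCount χ X i` is truncated subtraction, i.e. `max 0 (α i - |X ∩ χ⁻¹ i|)`). -/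
def FairIndep {c : ℕ} (χ : V → Fin c) (α β : Fin c → ℕ) (k : ℕ) (X : Finset V) : Prop :=
  (∀ i, colorCount χ X i ≤ β i) ∧
    X.card + ∑ i, (α i - colorCount χ X i) ≤ k

/-!
An independent set `B` with `|B| < k` can always be enlarged. If some colour class of `B` is
below its lower bound `α i`, it is also below `β i ≤ |χ⁻¹ i|`; adding a vertex of that colour
raises `|B|` by one and lowers the deficit `∑ i, (α i - |B ∩ χ⁻¹ i|)` by one. Otherwise the
deficit is zero, and `|B| < k ≤ ∑ i, β i` gives a colour class below its upper bound; adding a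
vertex of that colour raises `|B| + deficit` from below `k` to at most `k`.
-/

section ColorCount

omit [Fintype V]

variable {c : ℕ} (χ : V → Fin c)

lemma colorCount_insert {B : Finset V} {v : V} (hv : v ∉ B) (j : Fin c) :
    colorCount χ (insert v B) j = colorCount χ B j + if χ v = j then 1 else 0 := by
  unfold colorCount
  rw [filter_insert]
  split_ifs
  · exact card_insert_of_notMem fun hmem => hv (mem_filter.1 hmem).1
  · rfl

omit [DecidableEq V] in
lemma sum_colorCount (X : Finset V) : ∑ i, colorCount χ X i = X.card :=
  (card_eq_sum_card_fiberwise fun v _ => mem_univ (χ v)).symm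

variable (α : Fin c → ℕ)

lemma sum_sub_colorCount_insert_le {B : Finset V} {v : V} (hv : v ∉ B) :
    ∑ j, (α j - colorCount χ (insert v B) j) ≤ ∑ j, (α j - colorCount χ B j) :=
  sum_le_sum fun j _ => by rw [colorCount_insert χ hv]; omega

lemma sum_sub_colorCount_insert_add_one {B : Finset V} {v : V} (hv : v ∉ B)
    (hα : colorCount χ B (χ v) < α (χ v)) :
    ∑ j, (α j - colorCount χ (insert v B) j) + 1 = ∑ j, (α j - colorCount χ B j) := by
  have hpoint : ∀ j, α j - colorCount χ B j =
      (α j - colorCount χ (insert v B) j) + if j = χ v then 1 else 0 := by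
    intro j
    rw [colorCount_insert χ hv]
    by_cases h : j = χ v
    · subst h; simp only [if_true]; omega
    · simp only [h, Ne.symm h, if_false]; omega
  rw [sum_congr rfl fun j _ => hpoint j, sum_add_distrib, sum_ite_eq', if_pos (mem_univ _)]

end ColorCount

omit [DecidableEq V] in
lemma exists_notMem_of_colorCount_lt {c : ℕ} (χ : V → Fin c) {X : Finset V} {i : Fin c}
    (h : colorCount χ X i < colorCount χ univ i) : ∃ v ∉ X, χ v = i := by
  obtain ⟨v, hv, hvX⟩ := exists_mem_notMem_of_card_lt_card h
  exact ⟨v, fun hmem => hvX (mem_filter.2 ⟨hmem, (mem_filter.1 hv).2⟩), (mem_filter.1 hv).2⟩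

namespace FairIndep

variable {c : ℕ} {χ : V → Fin c} {α β : Fin c → ℕ} {k : ℕ} {B : Finset V}

omit [Fintype V] in
lemma insert_of_colorCount_lt (hB : FairIndep χ α β k B) {v : V} (hv : v ∉ B)
    (hβ : colorCount χ B (χ v) < β (χ v))
    (hroom : colorCount χ B (χ v) < α (χ v) ∨ B.card + ∑ j, (α j - colorCount χ B j) < k) :
    FairIndep χ α β k (insert v B) := by
  refine ⟨fun j => ?_, ?_⟩
  · rw [colorCount_insert χ hv]
    split_ifs with h
    · subst h; omega
    · exact hB.1 j
  · rw [card_insert_of_notMem hv]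
    rcases hroom with hα | hk
    · have := sum_sub_colorCount_insert_add_one χ α hv hα
      have := hB.2
      omega
    · have := sum_sub_colorCount_insert_le χ α hv
      omega

lemma exists_insert_of_card_lt (hαβ : ∀ i, α i ≤ β i) (hkβ : k ≤ ∑ i, β i)
    (hfull : ∀ i, β i ≤ colorCount χ univ i) (hB : FairIndep χ α β k B) (hlt : B.card < k) :
    ∃ v ∉ B, FairIndep χ α β k (insert v B) := by
  by_cases hsaturated : ∀ i, α i ≤ colorCount χ B i
  · have hzero : ∑ j, (α j - colorCount χ B j) = 0 :=
      sum_eq_zero fun j _ => Nat.sub_eq_zero_of_le (hsaturated j)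
    obtain ⟨i, -, hi⟩ : ∃ i ∈ univ, colorCount χ B i < β i := by
      apply exists_lt_of_sum_lt
      rw [sum_colorCount]
      omega
    obtain ⟨v, hv, rfl⟩ := exists_notMem_of_colorCount_lt χ (hi.trans_le (hfull i))
    exact ⟨v, hv, hB.insert_of_colorCount_lt hv hi (Or.inr (by omega))⟩
  · obtain ⟨i, hi⟩ := not_forall.1 hsaturated
    rw [not_le] at hi
    have hiβ := hi.trans_le (hαβ i)
    obtain ⟨v, hv, rfl⟩ := exists_notMem_of_colorCount_lt χ (hiβ.trans_le (hfull i))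
    exact ⟨v, hv, hB.insert_of_colorCount_lt hv hiβ (Or.inl hi)⟩

end FairIndep

theorem fairIndep_rank_general {c : ℕ} (χ : V → Fin c) (α β : Fin c → ℕ) (k : ℕ)
    (hαβ : ∀ i, α i ≤ β i) (hk2 : k ≤ ∑ i, β i)
    (hfull : ∀ i, β i ≤ colorCount χ (Finset.univ : Finset V) i)
    (B : Finset V) (hB : FairIndep χ α β k B)
    (hmax : ∀ B' : Finset V, FairIndep χ α β k B' → B ⊆ B' → B' = B) :
    B.card = k := by
  refine (le_of_add_le_left hB.2).eq_of_not_lt fun hlt => ?_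
  obtain ⟨v, hv, hinsert⟩ := hB.exists_insert_of_card_lt hαβ hk2 hfull hlt
  exact hv (hmax _ hinsert (subset_insert v B) ▸ mem_insert_self v B)

theorem fairIndep_rank {c : ℕ} (χ : V → Fin c) (α β : Fin c → ℕ) (k : ℕ)
    (hαβ : ∀ i, α i ≤ β i) (hk1 : ∑ i, α i ≤ k) (hk2 : k ≤ ∑ i, β i)
    (hfull : ∀ i, β i ≤ colorCount χ (Finset.univ : Finset V) i)
    (B : Finset V) (hB : FairIndep χ α β k B)
    (hmax : ∀ B' : Finset V, FairIndep χ α β k B' → B ⊆ B' → B' = B) :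
    B.card = k :=
  fairIndep_rank_general χ α β k hαβ hk2 hfull B hB hmax
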